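/- arXiv:2205.03131 — 4 statements merged into one kernel-verified Lean document; each statement's English description precedes it below -/
import Mathlib

section
/- Suppose that the excess loss r(W', Z') is σ-sub-Gaussian when (W', Z') has joint law P_W ⊗ μ. Then the expected generalization error satisfies E[ℰ(W, Sₙ)] ≤ (1/n) Σ_{i=1}^n √(2 σ² I(W; Zᵢ)). -/
/-!
Write `Q = P_W ⊗ μ` and `Pᵢ` for the law of `(W, Zᵢ)`. Applying the Donsker–Varadhan inequality
`Pᵢ[g] ≤ D(Pᵢ ‖ Q) + log Q[e^g]` to `g = -η (r - Q[r])` and using the sub-Gaussian bound gives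
`η (Q[r] - Pᵢ[r]) ≤ D(Pᵢ ‖ Q) + σ²η²/2` for every `η`; optimizing over `η` yields
`Q[r] - Pᵢ[r] ≤ √(2σ² D(Pᵢ ‖ Q))`. Finally `ℓ` and `r` differ by a function of `z` alone, and
both `Q` and `Pᵢ` have `z`-marginal `μ`, so
`E[ℰ(W, Sₙ)] = (1/n) ∑ᵢ (Q[ℓ] - Pᵢ[ℓ]) = (1/n) ∑ᵢ (Q[r] - Pᵢ[r])`.
-/

open MeasureTheory ProbabilityTheory

/-- Real-valued Kullback–Leibler divergence `D(P‖Q) = ∫ log (dP/dQ) dP`. -/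
noncomputable def klDivR {α : Type*} [MeasurableSpace α] (P Q : Measure α) : ℝ :=
  ∫ x, llr P Q x ∂P

open Real InformationTheory

lemma Real.mul_le_mul_log_add_exp {a : ℝ} (ha : 0 ≤ a) (b : ℝ) : a * b ≤ a * log a + exp b := by
  rcases ha.eq_or_lt with rfl | ha
  · simpa using (exp_pos b).le
  · have h := add_one_le_exp (b - log a)
    rw [exp_sub, exp_log ha, le_div_iff₀' ha] at h
    linarith

lemma Real.le_sqrt_two_mul_of_forall_mul_le {Δ K s : ℝ} (hs : 0 ≤ s)
    (h : ∀ η : ℝ, η * Δ ≤ K + s * η ^ 2 / 2) : Δ ≤ √(2 * s * K) := by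
  rcases le_or_gt Δ 0 with hΔ | hΔ
  · exact hΔ.trans (sqrt_nonneg _)
  rcases hs.eq_or_lt with rfl | hs
  · have h' := h ((K + 1) / Δ)
    rw [div_mul_cancel₀ _ hΔ.ne'] at h'
    linarith
  · refine le_sqrt_of_sq_le ?_
    have h' := h (Δ / s)
    field_simp at h'
    nlinarith

section ChangeOfMeasure

variable {α : Type*} [MeasurableSpace α] {P Q : Measure α}

lemma klDivR_nonneg [IsProbabilityMeasure P] [IsProbabilityMeasure Q] (hPQ : P ≪ Q) :
    0 ≤ klDivR P Q := by
  rw [klDivR, ← toReal_klDiv_of_measure_eq hPQ (by simp)]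
  exact ENNReal.toReal_nonneg

theorem integral_le_klDivR_add_log_integral_exp [IsProbabilityMeasure P] [IsProbabilityMeasure Q]
    (hPQ : P ≪ Q) (hllr : Integrable (llr P Q) P) {f : α → ℝ} (hfP : Integrable f P)
    (hfQ : Integrable (fun x => exp (f x)) Q) :
    ∫ x, f x ∂P ≤ klDivR P Q + log (∫ x, exp (f x) ∂Q) := by
  -- Gibbs' inequality for the tilted measure `e^f Q / Q[e^f]`
  have : IsProbabilityMeasure (Q.tilted f) := isProbabilityMeasure_tilted hfQ
  have h := klDivR_nonneg (hPQ.trans (absolutelyContinuous_tilted hfQ))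
  rw [klDivR, integral_llr_tilted_right hPQ hfP hfQ hllr] at h
  rw [klDivR]
  linarith

lemma integrable_of_integrable_llr_of_integrable_exp_mul [IsFiniteMeasure P] [SigmaFinite Q]
    (hPQ : P ≪ Q) (hllr : Integrable (llr P Q) P) {f : α → ℝ} (hf : Measurable f) (c : ℝ)
    (hmgf : ∀ η : ℝ, Integrable (fun x => exp (η * (f x - c))) Q) :
    Integrable f P := by
  suffices Integrable (fun x => f x - c) P by
    simpa only [sub_eq_add_neg, integrable_add_const_iff] using this
  rw [← integrable_rnDeriv_smul_iff hPQ]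
  have hllrQ := (integrable_rnDeriv_smul_iff hPQ).mpr hllr
  refine (hllrQ.add ((hmgf 1).add (hmgf (-1)))).mono'
    ((Measure.measurable_rnDeriv P Q).ennreal_toReal.smul (hf.sub_const c)).aestronglyMeasurable
    (ae_of_all _ fun x => ?_)
  have hρ : 0 ≤ (P.rnDeriv Q x).toReal := ENNReal.toReal_nonneg
  have hexp_abs : exp |f x - c| ≤ exp (1 * (f x - c)) + exp (-1 * (f x - c)) := by
    rw [one_mul, neg_one_mul]
    rcases abs_cases (f x - c) with ⟨h, -⟩ | ⟨h, -⟩ <;> rw [h]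
    <;> linarith [exp_pos (f x - c), exp_pos (-(f x - c))]
  -- Young: `ρ |f - c| ≤ ρ log ρ + exp |f - c|` for the density `ρ = dP/dQ`
  have hyoung := mul_le_mul_log_add_exp hρ |f x - c|
  simp only [Real.norm_eq_abs, smul_eq_mul, abs_mul, abs_of_nonneg hρ, Pi.add_apply, llr]
  linarith

theorem integral_sub_integral_le_sqrt_klDivR [IsProbabilityMeasure P] [IsProbabilityMeasure Q]
    (hPQ : P ≪ Q) (hllr : Integrable (llr P Q) P) {f : α → ℝ} (hfP : Integrable f P) (σ : ℝ)
    (hmgf : ∀ η : ℝ, Integrable (fun x => exp (η * (f x - ∫ y, f y ∂Q))) Q)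
    (hsubG : ∀ η : ℝ, log (∫ x, exp (η * (f x - ∫ y, f y ∂Q)) ∂Q) ≤ σ ^ 2 * η ^ 2 / 2) :
    ∫ x, f x ∂Q - ∫ x, f x ∂P ≤ √(2 * σ ^ 2 * klDivR P Q) := by
  refine le_sqrt_two_mul_of_forall_mul_le (sq_nonneg σ) fun η => ?_
  have hDV := integral_le_klDivR_add_log_integral_exp hPQ hllr
    (f := fun x => -η * (f x - ∫ y, f y ∂Q)) ((hfP.sub (integrable_const _)).const_mul (-η))
    (hmgf (-η))
  have hmean : ∫ x, -η * (f x - ∫ y, f y ∂Q) ∂P = η * (∫ x, f x ∂Q - ∫ x, f x ∂P) := by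
    rw [integral_const_mul, integral_sub hfP (integrable_const _), integral_const]
    simp only [probReal_univ, one_smul]
    ring
  have hlog := hsubG (-η)
  rw [neg_sq] at hlog
  linarith

end ChangeOfMeasure

namespace ProbabilityTheory

variable {Ω : Type*} [MeasurableSpace Ω] {P : Measure Ω} [IsProbabilityMeasure P]

lemma IndepFun.integrable_right_of_integrable_add {X Y : Ω → ℝ} (hX : AEMeasurable X P)
    (hY : AEMeasurable Y P) (hXY : IndepFun X Y P) (hsum : Integrable (X + Y) P) :
    Integrable Y P := by
  have : IsProbabilityMeasure (P.map X) := Measure.isProbabilityMeasure_map hX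
  have hadd : Integrable (fun q : ℝ × ℝ => q.1 + q.2) ((P.map X).prod (P.map Y)) := by
    rw [← (indepFun_iff_map_prod_eq_prod_map_map hX hY).mp hXY,
      integrable_map_measure (by fun_prop) (hX.prodMk hY)]
    exact hsum
  obtain ⟨x, hx⟩ := hadd.prod_right_ae.exists
  have hid : Integrable id (P.map Y) :=
    (hx.sub (integrable_const x)).congr (ae_of_all _ fun y => by simp)
  exact (integrable_map_measure aestronglyMeasurable_id hY).mp hid

lemma iIndepFun.integrable_of_integrable_sum {ι : Type*} [Fintype ι] {X : ι → Ω → ℝ}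
    (hX : ∀ i, Measurable (X i)) (hindep : iIndepFun X P) (hsum : Integrable (∑ i, X i) P)
    (i : ι) : Integrable (X i) P := by
  classical
  refine IndepFun.integrable_right_of_integrable_add (by fun_prop) (hX i).aemeasurable
    (hindep.indepFun_finsetSum_of_notMem hX (Finset.notMem_erase i Finset.univ)) ?_
  rwa [Finset.sum_erase_add _ _ (Finset.mem_univ i)]

end ProbabilityTheory

section SecondMarginal

variable {α β : Type*} [MeasurableSpace α] [MeasurableSpace β] {ν : Measure (α × β)}
  {μ : Measure β} {g : α × β → ℝ} {h : β → ℝ}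

lemma integrable_add_comp_snd (hν : ν.snd = μ) (hg : Integrable g ν) (hh : Integrable h μ) :
    Integrable (fun p => g p + h p.2) ν := by
  subst hν
  exact hg.add (hh.comp_measurable measurable_snd)

lemma integral_add_comp_snd (hν : ν.snd = μ) (hg : Integrable g ν) (hh : Integrable h μ) :
    ∫ p, g p + h p.2 ∂ν = ∫ p, g p ∂ν + ∫ z, h z ∂μ := by
  subst hν
  have hh' : Integrable (fun p => h p.2) ν := hh.comp_measurable measurable_snd
  rw [integral_add hg hh']
  exact congrArg _ (integral_map measurable_snd.aemeasurable hh.1).symm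

end SecondMarginal

section GeneralizationError

variable {Ω 𝒲 𝒵 : Type*} [MeasurableSpace Ω] [MeasurableSpace 𝒲] [MeasurableSpace 𝒵]
  {P : Measure Ω} [IsProbabilityMeasure P] {μ : Measure 𝒵} {n : ℕ} {W : Ω → 𝒲}
  {Z : Fin n → Ω → 𝒵}

lemma integral_generalizationError_eq [SFinite μ] (hn : n ≠ 0) (hW : AEMeasurable W P)
    (hZ : ∀ i, AEMeasurable (Z i) P) {f : 𝒲 → 𝒵 → ℝ}
    (hfQ : Integrable (fun p : 𝒲 × 𝒵 => f p.1 p.2) ((P.map W).prod μ))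
    (hfP : ∀ i, Integrable (fun p : 𝒲 × 𝒵 => f p.1 p.2) (P.map fun ω => (W ω, Z i ω))) :
    ∫ ω, (∫ z, f (W ω) z ∂μ - (n : ℝ)⁻¹ * ∑ i, f (W ω) (Z i ω)) ∂P
      = (n : ℝ)⁻¹ * ∑ i, (∫ p, f p.1 p.2 ∂((P.map W).prod μ)
          - ∫ p, f p.1 p.2 ∂(P.map fun ω => (W ω, Z i ω))) := by
  have hjoint i : AEMeasurable (fun ω => (W ω, Z i ω)) P := hW.prodMk (hZ i)
  have hpopInt : Integrable (fun ω => ∫ z, f (W ω) z ∂μ) P :=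
    (integrable_map_measure hfQ.1.integral_prod_right' hW).mp hfQ.integral_prod_left
  have hpop : ∫ ω, ∫ z, f (W ω) z ∂μ ∂P = ∫ p, f p.1 p.2 ∂((P.map W).prod μ) := by
    rw [integral_prod _ hfQ, integral_map hW hfQ.1.integral_prod_right']
  have hempInt i : Integrable (fun ω => f (W ω) (Z i ω)) P :=
    (integrable_map_measure (hfP i).1 (hjoint i)).mp (hfP i)
  have hemp i : ∫ ω, f (W ω) (Z i ω) ∂P = ∫ p, f p.1 p.2 ∂(P.map fun ω => (W ω, Z i ω)) :=
    (integral_map (hjoint i) (hfP i).1).symm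
  rw [integral_sub hpopInt ((integrable_finsetSum _ fun i _ => hempInt i).const_mul _),
    integral_const_mul, integral_finsetSum _ fun i _ => hempInt i, hpop, Finset.sum_sub_distrib]
  simp only [hemp, Finset.sum_const, Finset.card_univ, Fintype.card_fin, nsmul_eq_mul]
  field_simp

lemma integrable_of_integrable_generalizationError (hn : 0 < n) (hZ : ∀ i, Measurable (Z i))
    (hZlaw : ∀ i, P.map (Z i) = μ) (hindep : iIndepFun Z P) (hW : AEMeasurable W P)
    {ℓ : 𝒲 → 𝒵 → ℝ} {h : 𝒵 → ℝ} (hh : Measurable h)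
    (hexcess : ∀ᵐ w ∂(P.map W), Integrable (fun z => ℓ w z - h z) μ)
    (hexcessZ : ∀ i, Integrable (fun p : 𝒲 × 𝒵 => ℓ p.1 p.2 - h p.2) (P.map fun ω => (W ω, Z i ω)))
    (hgen : Integrable (fun ω => ∫ z, ℓ (W ω) z ∂μ - (n : ℝ)⁻¹ * ∑ i, ℓ (W ω) (Z i ω)) P) :
    Integrable h μ := by
  -- Otherwise no `ℓ w` is `μ`-integrable, so the population risk is the junk value `0`, the
  -- generalization error makes `∑ i, h ∘ Z i` integrable, and independence makes each summand so.
  by_contra hh_int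
  have hmean : ∀ᵐ ω ∂P, ∫ z, ℓ (W ω) z ∂μ = 0 := ae_of_ae_map hW <| hexcess.mono fun w hw =>
    integral_undef fun hℓw => hh_int ((hℓw.sub hw).congr (ae_of_all _ fun z => by simp))
  have hsumℓ : Integrable (fun ω => ∑ i, ℓ (W ω) (Z i ω)) P := by
    refine (hgen.const_mul (-n)).congr (hmean.mono fun ω hω => ?_)
    simp only [hω]
    field_simp
    ring
  have hsumh : Integrable (∑ i, fun ω => h (Z i ω)) P := by
    have hexcessZ' i : Integrable (fun ω => ℓ (W ω) (Z i ω) - h (Z i ω)) P :=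
      (integrable_map_measure (hexcessZ i).1 (hW.prodMk (hZ i).aemeasurable)).mp (hexcessZ i)
    refine (hsumℓ.sub (integrable_finsetSum Finset.univ fun i _ => hexcessZ' i)).congr
      (ae_of_all _ fun ω => ?_)
    simp [Finset.sum_sub_distrib]
  have hZ₀ := (hindep.comp (fun _ => h) fun _ => hh).integrable_of_integrable_sum
    (fun i => hh.comp (hZ i)) hsumh ⟨0, hn⟩
  rw [← hZlaw ⟨0, hn⟩] at hh_int
  exact hh_int ((integrable_map_measure hh.aestronglyMeasurable (hZ _).aemeasurable).mpr hZ₀)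

end GeneralizationError

theorem subGaussian_generalization_bound_general
    {Ω 𝒲 𝒵 : Type*} [MeasurableSpace Ω] [MeasurableSpace 𝒲] [MeasurableSpace 𝒵]
    (P : Measure Ω) [IsProbabilityMeasure P]
    (μ : Measure 𝒵) [IsProbabilityMeasure μ]
    (ℓ : 𝒲 → 𝒵 → ℝ) (hℓ : Measurable (Function.uncurry ℓ))
    (n : ℕ) (hn : 0 < n)
    (Z : Fin n → Ω → 𝒵) (hZmeas : ∀ i, Measurable (Z i))
    (hZlaw : ∀ i, P.map (Z i) = μ)
    (hindep : iIndepFun Z P)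
    (W : Ω → 𝒲) (hW : Measurable W)
    (wstar : 𝒲)
    (r : 𝒲 → 𝒵 → ℝ) (hr : r = fun w z => ℓ w z - ℓ wstar z)
    (σ : ℝ)
    -- the excess loss is integrable and `σ`-sub-Gaussian under `P_W ⊗ μ`
    (hrInt : Integrable (fun p : 𝒲 × 𝒵 => r p.1 p.2) ((P.map W).prod μ))
    (hMGF : ∀ η : ℝ, Integrable
      (fun p : 𝒲 × 𝒵 => Real.exp (η * (r p.1 p.2 - ∫ q, r q.1 q.2 ∂((P.map W).prod μ))))
      ((P.map W).prod μ))
    (hsubG : ∀ η : ℝ,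
      Real.log (∫ p, Real.exp (η * (r p.1 p.2 - ∫ q, r q.1 q.2 ∂((P.map W).prod μ)))
          ∂((P.map W).prod μ)) ≤ σ ^ 2 * η ^ 2 / 2)
    -- all expectations appearing are finite
    (hgenInt : Integrable
      (fun ω => (∫ z, ℓ (W ω) z ∂μ) - (n : ℝ)⁻¹ * ∑ i, ℓ (W ω) (Z i ω)) P)
    (hac : ∀ i, P.map (fun ω => (W ω, Z i ω)) ≪ (P.map W).prod μ)
    (hllr : ∀ i, Integrable (llr (P.map (fun ω => (W ω, Z i ω))) ((P.map W).prod μ))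
        (P.map (fun ω => (W ω, Z i ω)))) :
    ∫ ω, ((∫ z, ℓ (W ω) z ∂μ) - (n : ℝ)⁻¹ * ∑ i, ℓ (W ω) (Z i ω)) ∂P
      ≤ (n : ℝ)⁻¹ * ∑ i, Real.sqrt (2 * σ ^ 2 *
          klDivR (P.map (fun ω => (W ω, Z i ω))) ((P.map W).prod μ)) := by
  subst hr
  have : IsProbabilityMeasure (P.map W) := Measure.isProbabilityMeasure_map hW.aemeasurable
  have hjoint i : Measurable fun ω => (W ω, Z i ω) := hW.prodMk (hZmeas i)
  have (i : Fin n) : IsProbabilityMeasure (P.map fun ω => (W ω, Z i ω)) :=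
    Measure.isProbabilityMeasure_map (hjoint i).aemeasurable
  have hℓstar : Measurable (ℓ wstar) := hℓ.comp (measurable_const.prodMk measurable_id)
  have hexcess : Measurable fun p : 𝒲 × 𝒵 => ℓ p.1 p.2 - ℓ wstar p.2 :=
    hℓ.sub (hℓstar.comp measurable_snd)
  have hexcessP i : Integrable (fun p : 𝒲 × 𝒵 => ℓ p.1 p.2 - ℓ wstar p.2)
      (P.map fun ω => (W ω, Z i ω)) :=
    integrable_of_integrable_llr_of_integrable_exp_mul (hac i) (hllr i) hexcess _ hMGF
  have hℓstar_int : Integrable (ℓ wstar) μ :=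
    integrable_of_integrable_generalizationError hn hZmeas hZlaw hindep hW.aemeasurable hℓstar
      hrInt.prod_right_ae hexcessP hgenInt
  have hsndQ : ((P.map W).prod μ).snd = μ := Measure.snd_prod
  have hsnd i : (P.map fun ω => (W ω, Z i ω)).snd = μ :=
    (Measure.snd_map_prodMk hW).trans (hZlaw i)
  have hdecomp : (fun p : 𝒲 × 𝒵 => ℓ p.1 p.2)
      = fun p => (ℓ p.1 p.2 - ℓ wstar p.2) + ℓ wstar p.2 := by
    simp
  rw [integral_generalizationError_eq hn.ne' hW.aemeasurable (fun i => (hZmeas i).aemeasurable)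
    (hdecomp ▸ integrable_add_comp_snd hsndQ hrInt hℓstar_int)
    (fun i => hdecomp ▸ integrable_add_comp_snd (hsnd i) (hexcessP i) hℓstar_int), hdecomp]
  gcongr with i
  rw [integral_add_comp_snd hsndQ hrInt hℓstar_int,
    integral_add_comp_snd (hsnd i) (hexcessP i) hℓstar_int, add_sub_add_right_eq_sub]
  exact integral_sub_integral_le_sqrt_klDivR (hac i) (hllr i) (hexcessP i) σ hMGF hsubG

/-- **Theorem 2 (sub-Gaussian excess loss, generalization error bound).**
If the excess loss `r(W', Z')` is `σ`-sub-Gaussian under the product law `P_W ⊗ μ`, then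
`E[ℰ(W, Sₙ)] ≤ (1/n) ∑ᵢ √(2σ² I(W; Zᵢ))`. -/
theorem subGaussian_generalization_bound
    {Ω 𝒲 𝒵 : Type*} [MeasurableSpace Ω] [MeasurableSpace 𝒲] [MeasurableSpace 𝒵]
    (P : Measure Ω) [IsProbabilityMeasure P]
    (μ : Measure 𝒵) [IsProbabilityMeasure μ]
    (ℓ : 𝒲 → 𝒵 → ℝ) (hℓ : Measurable (Function.uncurry ℓ))
    (n : ℕ) (hn : 0 < n)
    (Z : Fin n → Ω → 𝒵) (hZmeas : ∀ i, Measurable (Z i))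
    (hZlaw : ∀ i, P.map (Z i) = μ)
    (hindep : iIndepFun Z P)
    (W : Ω → 𝒲) (hW : Measurable W)
    (wstar : 𝒲) (hwstar : ∀ w, ∫ z, ℓ wstar z ∂μ ≤ ∫ z, ℓ w z ∂μ)
    (r : 𝒲 → 𝒵 → ℝ) (hr : r = fun w z => ℓ w z - ℓ wstar z)
    (σ : ℝ) (hσ : 0 ≤ σ)
    -- the excess loss is integrable and `σ`-sub-Gaussian under `P_W ⊗ μ`
    (hrInt : Integrable (fun p : 𝒲 × 𝒵 => r p.1 p.2) ((P.map W).prod μ))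
    (hMGF : ∀ η : ℝ, Integrable
      (fun p : 𝒲 × 𝒵 => Real.exp (η * (r p.1 p.2 - ∫ q, r q.1 q.2 ∂((P.map W).prod μ))))
      ((P.map W).prod μ))
    (hsubG : ∀ η : ℝ,
      Real.log (∫ p, Real.exp (η * (r p.1 p.2 - ∫ q, r q.1 q.2 ∂((P.map W).prod μ)))
          ∂((P.map W).prod μ)) ≤ σ ^ 2 * η ^ 2 / 2)
    -- all expectations appearing are finite
    (hgenInt : Integrable
      (fun ω => (∫ z, ℓ (W ω) z ∂μ) - (n : ℝ)⁻¹ * ∑ i, ℓ (W ω) (Z i ω)) P)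
    (hac : ∀ i, P.map (fun ω => (W ω, Z i ω)) ≪ (P.map W).prod μ)
    (hllr : ∀ i, Integrable (llr (P.map (fun ω => (W ω, Z i ω))) ((P.map W).prod μ))
        (P.map (fun ω => (W ω, Z i ω)))) :
    ∫ ω, ((∫ z, ℓ (W ω) z ∂μ) - (n : ℝ)⁻¹ * ∑ i, ℓ (W ω) (Z i ω)) ∂P
      ≤ (n : ℝ)⁻¹ * ∑ i, Real.sqrt (2 * σ ^ 2 *
          klDivR (P.map (fun ω => (W ω, Z i ω))) ((P.map W).prod μ)) :=
  subGaussian_generalization_bound_general P μ ℓ hℓ n hn Z hZmeas hZlaw hindep W hW wstar r hr σ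
    hrInt hMGF hsubG hgenInt hac hllr
end

section
/- Suppose that the excess loss r(W', Z') is σ-sub-Gaussian when (W', Z') has joint law P_W ⊗ μ, and let ρ := E_{P_W ⊗ μ}[r(W', Z')] > 0. Then for every η with 0 < η < 2ρ/σ², setting a_η := 1 − ησ²/(2ρ), the expected excess risk satisfies E[ℛ(W)] ≤ (1/a_η) · E[ℛ̂(W, Sₙ)] + (1/(n η a_η)) Σ_{i=1}^n I(W; Zᵢ). -/
/-! By the Donsker–Varadhan variational formula, for `ν ≪ m` the mean of `t X` under `ν` is at
most `D(ν‖m)` plus the cumulant generating function of `X` under `m` at `t`. Take `m = P_W ⊗ μ`,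
`ν` the joint law of `(W, Zᵢ)`, `X` the centred excess loss and `t = -η`: sub-Gaussianity bounds
the cumulant generating function by `σ² η² / 2`, so `η ρ - σ² η² / 2 ≤ η E[r(W, Zᵢ)] + I(W; Zᵢ)`.
The left side is `η a_η ρ`, and `ρ = E[ℛ(W)]` by Fubini; averaging over `i` gives the bound. -/

open MeasureTheory ProbabilityTheory

open Real in
theorem Real.mul_le_exp_add_mul_log_sub (a : ℝ) {b : ℝ} (hb : 0 ≤ b) :
    b * a ≤ exp a + b * log b - b := by
  rcases hb.eq_or_lt with rfl | hb
  · simpa using (exp_pos a).le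
  · have h := mul_le_mul_of_nonneg_left (add_one_le_exp (a - log b)) hb.le
    rw [exp_sub, exp_log hb, mul_div_cancel₀ _ hb.ne'] at h
    linarith

section ChangeOfMeasure

variable {α : Type*} [MeasurableSpace α] {ν m : Measure α}

theorem integrable_of_integrable_exp_of_integrable_llr [IsFiniteMeasure ν] [IsFiniteMeasure m]
    (hνm : ν ≪ m) (h_llr : Integrable (llr ν m) ν) {f : α → ℝ}
    (hf : AEStronglyMeasurable f m)
    (hf_exp : Integrable (fun x => Real.exp (f x)) m)
    (hf_exp_neg : Integrable (fun x => Real.exp (-f x)) m) :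
    Integrable f ν := by
  rw [← integrable_rnDeriv_smul_iff hνm]
  have h_mul_log : Integrable (fun x => (ν.rnDeriv m x).toReal • llr ν m x) m :=
    (integrable_rnDeriv_smul_iff hνm).mpr h_llr
  refine ((hf_exp.add hf_exp_neg).add h_mul_log).mono'
    ((Measure.measurable_rnDeriv ν m).ennreal_toReal.aestronglyMeasurable.smul hf)
    (Filter.Eventually.of_forall fun x => ?_)
  -- Young's inequality for `exp` with `b = dν/dm`: `b |f| ≤ e^{|f|} + b log b - b`.
  have hg : 0 ≤ (ν.rnDeriv m x).toReal := ENNReal.toReal_nonneg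
  have hexp_abs : Real.exp |f x| ≤ Real.exp (f x) + Real.exp (-f x) := by
    rcases abs_cases (f x) with ⟨h, _⟩ | ⟨h, _⟩ <;> rw [h] <;>
      linarith [Real.exp_pos (f x), Real.exp_pos (-f x)]
  have := Real.mul_le_exp_add_mul_log_sub |f x| hg
  simp only [smul_eq_mul, Pi.add_apply, Real.norm_eq_abs, abs_mul, abs_of_nonneg hg, llr_def]
  linarith

theorem integral_le_integral_llr_add_log_integral_exp
    [IsProbabilityMeasure ν] [IsProbabilityMeasure m]
    (hνm : ν ≪ m) (h_llr : Integrable (llr ν m) ν) {f : α → ℝ}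
    (hfν : Integrable f ν) (hfm : Integrable (fun x => Real.exp (f x)) m) :
    ∫ x, f x ∂ν ≤ ∫ x, llr ν m x ∂ν + Real.log (∫ x, Real.exp (f x) ∂m) := by
  have : IsProbabilityMeasure (m.tilted f) := isProbabilityMeasure_tilted hfm
  have hν_tilted : ν ≪ m.tilted f := hνm.trans (absolutelyContinuous_tilted hfm)
  have gibbs := InformationTheory.integral_llr_add_sub_measure_univ_nonneg hν_tilted
    (integrable_llr_tilted_right hνm hfν h_llr hfm)
  rw [integral_llr_tilted_right hνm hfν hfm h_llr] at gibbs
  simp only [probReal_univ] at gibbs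
  linarith

namespace ProbabilityTheory.HasSubgaussianMGF

variable {X : α → ℝ} {c : NNReal}

theorem integrable_of_absolutelyContinuous [IsFiniteMeasure ν] [IsFiniteMeasure m]
    (h : HasSubgaussianMGF X c m) (hνm : ν ≪ m) (h_llr : Integrable (llr ν m) ν) :
    Integrable X ν :=
  integrable_of_integrable_exp_of_integrable_llr hνm h_llr h.aestronglyMeasurable
    (by simpa using h.integrable_exp_mul 1) (by simpa using h.integrable_exp_mul (-1))

theorem mul_integral_le_integral_llr_add [IsProbabilityMeasure ν] [IsProbabilityMeasure m]
    (h : HasSubgaussianMGF X c m) (hνm : ν ≪ m) (h_llr : Integrable (llr ν m) ν) (t : ℝ) :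
    t * ∫ x, X x ∂ν ≤ ∫ x, llr ν m x ∂ν + c * t ^ 2 / 2 := by
  have hDV := integral_le_integral_llr_add_log_integral_exp hνm h_llr
    ((h.integrable_of_absolutelyContinuous hνm h_llr).const_mul t) (h.integrable_exp_mul t)
  have h_cgf : Real.log (∫ x, Real.exp (t * X x) ∂m) ≤ c * t ^ 2 / 2 := h.cgf_le t
  rw [integral_const_mul] at hDV
  linarith

end ProbabilityTheory.HasSubgaussianMGF

end ChangeOfMeasure

theorem ProbabilityTheory.hasSubgaussianMGF_of_log_integral_exp_le
    {α : Type*} [MeasurableSpace α] {m : Measure α} [NeZero m] {X : α → ℝ} {c : NNReal}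
    (h_int : ∀ t : ℝ, Integrable (fun x => Real.exp (t * X x)) m)
    (h_log : ∀ t : ℝ, Real.log (∫ x, Real.exp (t * X x) ∂m) ≤ c * t ^ 2 / 2) :
    HasSubgaussianMGF X c m where
  integrable_exp_mul := h_int
  mgf_le t := (Real.log_le_iff_le_exp (integral_exp_pos (h_int t))).mp (h_log t)

theorem integral_integral_comp_eq_integral_map_prod
    {Ω 𝒲 𝒵 : Type*} [MeasurableSpace Ω] [MeasurableSpace 𝒲] [MeasurableSpace 𝒵]
    {P : Measure Ω} {μ : Measure 𝒵} [SFinite μ] {W : Ω → 𝒲} (hW : Measurable W)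
    [SFinite (P.map W)] {f : 𝒲 × 𝒵 → ℝ} (hf : Integrable f ((P.map W).prod μ)) :
    ∫ ω, (∫ z, f (W ω, z) ∂μ) ∂P = ∫ p, f p ∂((P.map W).prod μ) := by
  rw [integral_prod f hf]
  exact (integral_map hW.aemeasurable hf.integral_prod_left.aestronglyMeasurable).symm

section Pushforward

variable {Ω α : Type*} [MeasurableSpace Ω] [MeasurableSpace α] {P : Measure Ω} {m : Measure α}
  {V : Ω → α} {f : α → ℝ} {ρ : ℝ} {c : NNReal}

theorem integrable_of_hasSubgaussianMGF_sub_const {ν : Measure α} [IsFiniteMeasure ν]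
    [IsFiniteMeasure m] (h : HasSubgaussianMGF (fun x => f x - ρ) c m) (hνm : ν ≪ m)
    (h_llr : Integrable (llr ν m) ν) :
    Integrable f ν := by
  simpa [sub_eq_add_neg] using h.integrable_of_absolutelyContinuous hνm h_llr

theorem integrable_comp_of_hasSubgaussianMGF_sub_const [IsFiniteMeasure P] [IsFiniteMeasure m]
    (hV : Measurable V) (h : HasSubgaussianMGF (fun x => f x - ρ) c m) (hVm : P.map V ≪ m)
    (h_llr : Integrable (llr (P.map V) m) (P.map V)) :
    Integrable (fun ω => f (V ω)) P :=
  have hf := integrable_of_hasSubgaussianMGF_sub_const h hVm h_llr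
  (integrable_map_measure hf.aestronglyMeasurable hV.aemeasurable).mp hf

theorem mul_sub_le_mul_integral_comp_add_klDivR [IsProbabilityMeasure P] [IsProbabilityMeasure m]
    (hV : Measurable V) (h : HasSubgaussianMGF (fun x => f x - ρ) c m) (hVm : P.map V ≪ m)
    (h_llr : Integrable (llr (P.map V) m) (P.map V)) (η : ℝ) :
    η * ρ - c * η ^ 2 / 2 ≤ η * ∫ ω, f (V ω) ∂P + klDivR (P.map V) m := by
  have : IsProbabilityMeasure (P.map V) := Measure.isProbabilityMeasure_map hV.aemeasurable
  have hf := integrable_of_hasSubgaussianMGF_sub_const h hVm h_llr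
  have h_mean : ∫ x, f x ∂(P.map V) = ∫ ω, f (V ω) ∂P :=
    integral_map hV.aemeasurable hf.aestronglyMeasurable
  have h_bound := h.mul_integral_le_integral_llr_add hVm h_llr (-η)
  rw [integral_sub hf (integrable_const ρ), h_mean, integral_const] at h_bound
  simp only [probReal_univ, smul_eq_mul, one_mul, neg_sq] at h_bound
  rw [klDivR]
  linarith

end Pushforward

theorem subGaussian_fast_rate_excess_risk_bound_general
    {Ω 𝒲 𝒵 : Type*} [MeasurableSpace Ω] [MeasurableSpace 𝒲] [MeasurableSpace 𝒵]
    (P : Measure Ω) [IsProbabilityMeasure P]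
    (μ : Measure 𝒵) [IsProbabilityMeasure μ]
    (n : ℕ) (hn : 0 < n)
    (Z : Fin n → Ω → 𝒵) (hZmeas : ∀ i, Measurable (Z i))
    (W : Ω → 𝒲) (hW : Measurable W)
    (r : 𝒲 → 𝒵 → ℝ)
    (σ : ℝ) (hσ : 0 < σ)
    -- the expected excess risk under `P_W ⊗ μ` is positive
    (ρ : ℝ) (hρ : ρ = ∫ q, r q.1 q.2 ∂((P.map W).prod μ)) (hρpos : 0 < ρ)
    -- the excess loss is integrable and `σ`-sub-Gaussian under `P_W ⊗ μ`
    (hrInt : Integrable (fun p : 𝒲 × 𝒵 => r p.1 p.2) ((P.map W).prod μ))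
    (hMGF : ∀ η : ℝ, Integrable
      (fun p : 𝒲 × 𝒵 => Real.exp (η * (r p.1 p.2 - ρ))) ((P.map W).prod μ))
    (hsubG : ∀ η : ℝ,
      Real.log (∫ p, Real.exp (η * (r p.1 p.2 - ρ)) ∂((P.map W).prod μ)) ≤ σ ^ 2 * η ^ 2 / 2)
    -- all expectations appearing are finite
    (hac : ∀ i, P.map (fun ω => (W ω, Z i ω)) ≪ (P.map W).prod μ)
    (hllr : ∀ i, Integrable (llr (P.map (fun ω => (W ω, Z i ω))) ((P.map W).prod μ))
        (P.map (fun ω => (W ω, Z i ω)))) :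
    ∀ η aη : ℝ, 0 < η → η < 2 * ρ / σ ^ 2 → aη = 1 - η * σ ^ 2 / (2 * ρ) →
    ∫ ω, (∫ z, r (W ω) z ∂μ) ∂P
      ≤ (1 / aη) * (∫ ω, (n : ℝ)⁻¹ * ∑ i, r (W ω) (Z i ω) ∂P)
        + (1 / (n * η * aη)) * ∑ i,
            klDivR (P.map (fun ω => (W ω, Z i ω))) ((P.map W).prod μ) := by
  intro η aη hη hη_lt haη
  have haη_pos : 0 < aη := by
    rw [haη, sub_pos, div_lt_one (by positivity), ← lt_div_iff₀ (by positivity)]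
    exact hη_lt
  have : IsProbabilityMeasure (P.map W) := Measure.isProbabilityMeasure_map hW.aemeasurable
  have h_subG : HasSubgaussianMGF (fun p : 𝒲 × 𝒵 => r p.1 p.2 - ρ)
      ⟨σ ^ 2, sq_nonneg σ⟩ ((P.map W).prod μ) :=
    hasSubgaussianMGF_of_log_integral_exp_le hMGF hsubG
  have h_aη : η * aη * ρ = η * ρ - σ ^ 2 * η ^ 2 / 2 := by
    rw [haη]; field_simp
  have hpair (i : Fin n) : Measurable fun ω => (W ω, Z i ω) := hW.prodMk (hZmeas i)
  have h_sample (i : Fin n) : η * aη * ρ ≤ η * ∫ ω, r (W ω) (Z i ω) ∂P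
      + klDivR (P.map (fun ω => (W ω, Z i ω))) ((P.map W).prod μ) :=
    h_aη ▸ mul_sub_le_mul_integral_comp_add_klDivR (hpair i) h_subG (hac i) (hllr i) η
  rw [integral_integral_comp_eq_integral_map_prod hW hrInt, ← hρ, integral_const_mul,
    integral_finsetSum _ fun i _ =>
      integrable_comp_of_hasSubgaussianMGF_sub_const (hpair i) h_subG (hac i) (hllr i)]
  set S := ∑ i, ∫ ω, r (W ω) (Z i ω) ∂P
  set K := ∑ i, klDivR (P.map (fun ω => (W ω, Z i ω))) ((P.map W).prod μ)
  have h_sum : n * (η * aη * ρ) ≤ η * S + K := by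
    simpa [S, K, Finset.sum_add_distrib, Finset.mul_sum] using
      Finset.sum_le_sum fun i (_ : i ∈ Finset.univ) => h_sample i
  have hd : (0 : ℝ) < n * η * aη := by positivity
  calc ρ ≤ (η * S + K) / (n * η * aη) := by rw [le_div_iff₀ hd]; linarith
    _ = _ := by field_simp

/-- **Theorem 3 (fast rate with sub-Gaussian condition, excess risk).** -/
theorem subGaussian_fast_rate_excess_risk_bound
    {Ω 𝒲 𝒵 : Type*} [MeasurableSpace Ω] [MeasurableSpace 𝒲] [MeasurableSpace 𝒵]
    (P : Measure Ω) [IsProbabilityMeasure P]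
    (μ : Measure 𝒵) [IsProbabilityMeasure μ]
    (ℓ : 𝒲 → 𝒵 → ℝ) (hℓ : Measurable (Function.uncurry ℓ))
    (n : ℕ) (hn : 0 < n)
    (Z : Fin n → Ω → 𝒵) (hZmeas : ∀ i, Measurable (Z i))
    (hZlaw : ∀ i, P.map (Z i) = μ)
    (hindep : iIndepFun Z P)
    (W : Ω → 𝒲) (hW : Measurable W)
    (wstar : 𝒲) (hwstar : ∀ w, ∫ z, ℓ wstar z ∂μ ≤ ∫ z, ℓ w z ∂μ)
    (r : 𝒲 → 𝒵 → ℝ) (hr : r = fun w z => ℓ w z - ℓ wstar z)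
    (σ : ℝ) (hσ : 0 < σ)
    -- the expected excess risk under `P_W ⊗ μ` is positive
    (ρ : ℝ) (hρ : ρ = ∫ q, r q.1 q.2 ∂((P.map W).prod μ)) (hρpos : 0 < ρ)
    -- the excess loss is integrable and `σ`-sub-Gaussian under `P_W ⊗ μ`
    (hrInt : Integrable (fun p : 𝒲 × 𝒵 => r p.1 p.2) ((P.map W).prod μ))
    (hMGF : ∀ η : ℝ, Integrable
      (fun p : 𝒲 × 𝒵 => Real.exp (η * (r p.1 p.2 - ρ))) ((P.map W).prod μ))
    (hsubG : ∀ η : ℝ,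
      Real.log (∫ p, Real.exp (η * (r p.1 p.2 - ρ)) ∂((P.map W).prod μ)) ≤ σ ^ 2 * η ^ 2 / 2)
    -- all expectations appearing are finite
    (hRiskInt : Integrable (fun ω => ∫ z, r (W ω) z ∂μ) P)
    (hEmpInt : Integrable (fun ω => (n : ℝ)⁻¹ * ∑ i, r (W ω) (Z i ω)) P)
    (hac : ∀ i, P.map (fun ω => (W ω, Z i ω)) ≪ (P.map W).prod μ)
    (hllr : ∀ i, Integrable (llr (P.map (fun ω => (W ω, Z i ω))) ((P.map W).prod μ))
        (P.map (fun ω => (W ω, Z i ω)))) :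
    ∀ η aη : ℝ, 0 < η → η < 2 * ρ / σ ^ 2 → aη = 1 - η * σ ^ 2 / (2 * ρ) →
    ∫ ω, (∫ z, r (W ω) z ∂μ) ∂P
      ≤ (1 / aη) * (∫ ω, (n : ℝ)⁻¹ * ∑ i, r (W ω) (Z i ω) ∂P)
        + (1 / (n * η * aη)) * ∑ i,
            klDivR (P.map (fun ω => (W ω, Z i ω))) ((P.map W).prod μ) :=
  subGaussian_fast_rate_excess_risk_bound_general P μ n hn Z hZmeas W hW r σ hσ ρ hρ hρpos hrInt
    hMGF hsubG hac hllr
end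

section
/- Suppose the Bernstein condition holds with exponent β = 1 and constant B ≥ 1, i.e. E_{P_W ⊗ μ}[r(W', Z')²] ≤ B · E_{P_W ⊗ μ}[r(W', Z')], that E_{P_W ⊗ μ}[r(W', Z')] ≥ 0, and that r(w, z) ≥ −b for all w ∈ 𝒲 and z ∈ 𝒵 with some b > 0. Then the learning tuple satisfies the (η, 1/2)-central condition with η = min(1/b, 1/(2B(e − 2))), i.e. log E_{P_W ⊗ μ}[exp(−η r(W', Z'))] ≤ −(1/2) η E_{P_W ⊗ μ}[r(W', Z')]. -/
/-!
For `x ≤ 1` one has `exp x ≤ 1 + x + (e - 2) x²`. With `x = -η r`, which is `≤ 1` because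
`η ≤ 1 / b`, integration bounds the moment generating function by
`1 - η E r + (e - 2) η² E r²`; the Bernstein condition and `2 (e - 2) B η ≤ 1` make the quadratic
term at most `η E r / 2`, and `log y ≤ y - 1` turns this into the bound on the cumulant
generating function.
-/

open MeasureTheory ProbabilityTheory

namespace Real

theorem exp_le_one_add_add_sq_div_two_of_nonpos {x : ℝ} (hx : x ≤ 0) :
    exp x ≤ 1 + x + x ^ 2 / 2 := by
  -- `(1 + x + x² / 2) * (1 - x + x² / 2) = 1 + x⁴ / 4 ≥ 1`
  have hq := quadratic_le_exp_of_nonneg (neg_nonneg.2 hx)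
  have hprod : exp x * exp (-x) = 1 := by rw [← exp_add, add_neg_cancel, exp_zero]
  nlinarith [exp_pos x, sq_nonneg (x ^ 2)]

theorem exp_le_one_add_add_mul_sq_of_nonneg {x : ℝ} (h0 : 0 ≤ x) (h1 : x ≤ 1) :
    exp x ≤ 1 + x + (exp 1 - 2) * x ^ 2 := by
  have tail (y : ℝ) : HasSum (fun n : ℕ => y ^ (n + 2) / (n + 2).factorial) (exp y - (1 + y)) := by
    have := (hasSum_nat_add_iff' 2).2 (exp_eq_exp_ℝ ▸ NormedSpace.expSeries_div_hasSum_exp y)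
    simpa [Finset.sum_range_succ] using this
  have := hasSum_le (fun n => ?_) (tail x) ((tail 1).mul_left (x ^ 2))
  · linarith
  · rw [one_pow, mul_one_div]
    exact div_le_div_of_nonneg_right (pow_le_pow_of_le_one h0 h1 (by omega)) (by positivity)

theorem exp_le_one_add_add_mul_sq {x : ℝ} (hx : x ≤ 1) :
    exp x ≤ 1 + x + (exp 1 - 2) * x ^ 2 := by
  rcases le_total 0 x with h0 | h0
  · exact exp_le_one_add_add_mul_sq_of_nonneg h0 hx
  · have : (1 : ℝ) / 2 ≤ exp 1 - 2 := by linarith [exp_one_gt_d9]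
    nlinarith [exp_le_one_add_add_sq_div_two_of_nonpos h0, sq_nonneg x]

end Real

namespace ProbabilityTheory

variable {Ω : Type*} [MeasurableSpace Ω] {μ : Measure Ω} {X : Ω → ℝ} {t : ℝ}

lemma integrable_exp_mul_of_ae_mul_le [IsFiniteMeasure μ] (hX : AEMeasurable X μ) (c : ℝ)
    (h : ∀ᵐ ω ∂μ, t * X ω ≤ c) : Integrable (fun ω => Real.exp (t * X ω)) μ := by
  refine .of_mem_Icc 0 (Real.exp c) (Real.measurable_exp.comp_aemeasurable (hX.const_mul t)) ?_
  filter_upwards [h] with ω hω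
  exact ⟨(Real.exp_pos _).le, Real.exp_le_exp.2 hω⟩

variable [IsProbabilityMeasure μ]

lemma mgf_le_quadratic_of_mul_le_one (hX : Integrable X μ)
    (hX2 : Integrable (fun ω => X ω ^ 2) μ) (htX : ∀ᵐ ω ∂μ, t * X ω ≤ 1) :
    mgf X μ t ≤ 1 + t * μ[X] + (Real.exp 1 - 2) * t ^ 2 * ∫ ω, X ω ^ 2 ∂μ := by
  have hlin : Integrable (fun ω => 1 + t * X ω) μ := (integrable_const 1).add (hX.const_mul t)
  have hquad : Integrable (fun ω => 1 + t * X ω + (Real.exp 1 - 2) * t ^ 2 * X ω ^ 2) μ :=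
    hlin.add (hX2.const_mul _)
  calc mgf X μ t ≤ ∫ ω, 1 + t * X ω + (Real.exp 1 - 2) * t ^ 2 * X ω ^ 2 ∂μ := by
        refine integral_mono_of_nonneg (ae_of_all _ fun ω => (Real.exp_pos _).le) hquad ?_
        filter_upwards [htX] with ω hω
        simpa [mul_pow, mul_assoc] using Real.exp_le_one_add_add_mul_sq hω
    _ = 1 + t * μ[X] + (Real.exp 1 - 2) * t ^ 2 * ∫ ω, X ω ^ 2 ∂μ := by
        rw [integral_add hlin (hX2.const_mul _),
          integral_add (integrable_const 1) (hX.const_mul t), integral_const_mul,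
          integral_const_mul, integral_const, probReal_univ, one_smul]

lemma cgf_le_quadratic_of_mul_le_one (hX : Integrable X μ)
    (hX2 : Integrable (fun ω => X ω ^ 2) μ) (htX : ∀ᵐ ω ∂μ, t * X ω ≤ 1) :
    cgf X μ t ≤ t * μ[X] + (Real.exp 1 - 2) * t ^ 2 * ∫ ω, X ω ^ 2 ∂μ := by
  have hpos := mgf_pos (integrable_exp_mul_of_ae_mul_le hX.aemeasurable 1 htX)
  rw [cgf]
  linarith [Real.log_le_sub_one_of_pos hpos, mgf_le_quadratic_of_mul_le_one hX hX2 htX]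

lemma cgf_neg_le_of_bernstein {B η : ℝ} (hX : Integrable X μ)
    (hX2 : Integrable (fun ω => X ω ^ 2) μ) (hηX : ∀ᵐ ω ∂μ, -η * X ω ≤ 1)
    (hBern : ∫ ω, X ω ^ 2 ∂μ ≤ B * μ[X]) (hB : 0 < B) (hη : 0 ≤ η)
    (hηB : 2 * (Real.exp 1 - 2) * B * η ≤ 1) :
    cgf X μ (-η) ≤ -(1 / 2) * η * μ[X] := by
  have hmean : 0 ≤ μ[X] :=
    nonneg_of_mul_nonneg_right ((integral_nonneg fun ω => sq_nonneg (X ω)).trans hBern) hB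
  have he : 0 ≤ Real.exp 1 - 2 := by linarith [Real.exp_one_gt_d9]
  calc cgf X μ (-η) ≤ -η * μ[X] + (Real.exp 1 - 2) * (-η) ^ 2 * ∫ ω, X ω ^ 2 ∂μ :=
        cgf_le_quadratic_of_mul_le_one hX hX2 hηX
    _ ≤ -η * μ[X] + (Real.exp 1 - 2) * η ^ 2 * (B * μ[X]) := by
        rw [neg_sq]; gcongr
    _ ≤ -(1 / 2) * η * μ[X] := by
        nlinarith [mul_nonneg hη hmean]

end ProbabilityTheory

theorem bernstein_implies_central_condition_general
    {𝒲 𝒵 : Type*} [MeasurableSpace 𝒲] [MeasurableSpace 𝒵]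
    (Pw : Measure 𝒲) [IsProbabilityMeasure Pw]
    (μ : Measure 𝒵) [IsProbabilityMeasure μ]
    (r : 𝒲 → 𝒵 → ℝ)
    (B b : ℝ) (hB : 1 ≤ B) (hb : 0 < b)
    -- the excess loss is bounded below by `-b`
    (hrlb : ∀ w z, -b ≤ r w z)
    -- all expectations appearing are finite
    (hrInt : Integrable (fun p : 𝒲 × 𝒵 => r p.1 p.2) (Pw.prod μ))
    (hr2Int : Integrable (fun p : 𝒲 × 𝒵 => (r p.1 p.2) ^ 2) (Pw.prod μ))
    -- Bernstein condition with exponent `β = 1`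
    (hBern : ∫ p, (r p.1 p.2) ^ 2 ∂(Pw.prod μ) ≤ B * ∫ p, r p.1 p.2 ∂(Pw.prod μ)) :
    Real.log (∫ p, Real.exp (-(min (1 / b) (1 / (2 * B * (Real.exp 1 - 2)))) * r p.1 p.2)
        ∂(Pw.prod μ))
      ≤ -(1 / 2) * (min (1 / b) (1 / (2 * B * (Real.exp 1 - 2))))
          * ∫ p, r p.1 p.2 ∂(Pw.prod μ) := by
  set η := min (1 / b) (1 / (2 * B * (Real.exp 1 - 2)))
  have hBe : 0 < 2 * B * (Real.exp 1 - 2) := by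
    have : 0 < Real.exp 1 - 2 := by linarith [Real.exp_one_gt_d9]
    have : 0 < B := by linarith
    positivity
  have hη : 0 < η := lt_min (by positivity) (by positivity)
  have hηb : η * b ≤ 1 := (le_div_iff₀ hb).1 (min_le_left _ _)
  have hηB : 2 * (Real.exp 1 - 2) * B * η ≤ 1 := by
    have : η * (2 * B * (Real.exp 1 - 2)) ≤ 1 := (le_div_iff₀ hBe).1 (min_le_right _ _)
    linarith
  refine cgf_neg_le_of_bernstein hrInt hr2Int (ae_of_all _ fun p => ?_) hBern
    (by linarith) hη.le hηB
  nlinarith [hrlb p.1 p.2]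

/-- **Corollary 1.** The Bernstein condition with `β = 1` (together with the excess loss being
bounded below by `-b`) implies the `(min(1/b, 1/(2B(e-2))), 1/2)`-central condition. -/
theorem bernstein_implies_central_condition
    {𝒲 𝒵 : Type*} [MeasurableSpace 𝒲] [MeasurableSpace 𝒵]
    (Pw : Measure 𝒲) [IsProbabilityMeasure Pw]
    (μ : Measure 𝒵) [IsProbabilityMeasure μ]
    (ℓ : 𝒲 → 𝒵 → ℝ) (hℓ : Measurable (Function.uncurry ℓ))
    (wstar : 𝒲) (hwstar : ∀ w, ∫ z, ℓ wstar z ∂μ ≤ ∫ z, ℓ w z ∂μ)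
    (r : 𝒲 → 𝒵 → ℝ) (hr : r = fun w z => ℓ w z - ℓ wstar z)
    (B b : ℝ) (hB : 1 ≤ B) (hb : 0 < b)
    -- the excess loss is bounded below by `-b`
    (hrlb : ∀ w z, -b ≤ r w z)
    -- all expectations appearing are finite
    (hrInt : Integrable (fun p : 𝒲 × 𝒵 => r p.1 p.2) (Pw.prod μ))
    (hr2Int : Integrable (fun p : 𝒲 × 𝒵 => (r p.1 p.2) ^ 2) (Pw.prod μ))
    (hexpInt : Integrable (fun p : 𝒲 × 𝒵 =>
        Real.exp (-(min (1 / b) (1 / (2 * B * (Real.exp 1 - 2)))) * r p.1 p.2)) (Pw.prod μ))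
    -- Bernstein condition with exponent `β = 1`
    (hBern : ∫ p, (r p.1 p.2) ^ 2 ∂(Pw.prod μ) ≤ B * ∫ p, r p.1 p.2 ∂(Pw.prod μ))
    -- nonnegative expected excess risk
    (hrpos : 0 ≤ ∫ p, r p.1 p.2 ∂(Pw.prod μ)) :
    Real.log (∫ p, Real.exp (-(min (1 / b) (1 / (2 * B * (Real.exp 1 - 2)))) * r p.1 p.2)
        ∂(Pw.prod μ))
      ≤ -(1 / 2) * (min (1 / b) (1 / (2 * B * (Real.exp 1 - 2))))
          * ∫ p, r p.1 p.2 ∂(Pw.prod μ) :=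
  bernstein_implies_central_condition_general Pw μ r B b hB hb hrlb hrInt hr2Int hBern
end

section
/- Suppose the learning tuple satisfies the expected η-central condition, i.e. E_{P_W ⊗ μ}[exp(−η r(W', Z'))] ≤ 1 for some η > 0, and the (u, c)-witness condition, i.e. E_{P_W ⊗ μ}[r(W', Z') · 1{r(W', Z') ≤ u}] ≥ c · E_{P_W ⊗ μ}[r(W', Z')] for some u > 0 and c ∈ (0, 1]. Then for every η' with 0 < η' < η, the learning tuple satisfies the (η', c')-central condition with c' = (c − cη'/η)/(η'u + 1), i.e. log E_{P_W ⊗ μ}[exp(−η' r(W', Z'))] ≤ −c' η' E_{P_W ⊗ μ}[r(W', Z')]. -/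
/-!
With `R_b(x) = e^{-bx} - 1 + bx`, the pointwise inequality
`e^{-η'x} + κ x 1{x ≤ u} ≤ (1 - a) + a e^{-ηx}` holds for
`a = η'²(ηu+1) / (η²(η'u+1))` and `κ = η'(η-η') / (η(η'u+1))`: after the linear terms cancel it
reduces to comparing `R_{η'}` with `R_η`, namely `η² R_{η'} ≤ η'² R_η` for `x ≤ 0` and
`η² (1 + η'x) R_{η'} ≤ η'² (1 + ηx) R_η` for `x ≥ 0`; both differences vanish at `0` and are
monotone. Taking expectations and using `E e^{-ηr} ≤ 1` gives
`E e^{-η'r} ≤ 1 - κ E[r 1{r ≤ u}] ≤ 1 - κ c E r`, and `log y ≤ y - 1` finishes, since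
`κ c = c' η'`.
-/

open MeasureTheory ProbabilityTheory Real

noncomputable def expRemainder (b x : ℝ) : ℝ := exp (-b * x) - 1 + b * x

lemma expRemainder_zero (b : ℝ) : expRemainder b 0 = 0 := by
  simp [expRemainder]

lemma expRemainder_nonneg (b x : ℝ) : 0 ≤ expRemainder b x := by
  have := add_one_le_exp (-b * x)
  unfold expRemainder
  linarith

lemma expRemainder_le_mul {b x : ℝ} (hb : 0 ≤ b) (hx : 0 ≤ x) : expRemainder b x ≤ b * x := by
  have : exp (-b * x) ≤ 1 := exp_le_one_iff.2 (by nlinarith)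
  unfold expRemainder
  linarith

lemma hasDerivAt_expRemainder (b x : ℝ) :
    HasDerivAt (expRemainder b) (b - b * exp (-b * x)) x := by
  have hlin : HasDerivAt (fun y => -b * y) (-b) x := by
    simpa using (hasDerivAt_id x).const_mul (-b)
  exact ((hlin.exp.sub_const 1).add ((hasDerivAt_id' x).const_mul b)).congr_deriv (by ring)

section

variable {η η' u x : ℝ}

lemma mul_exp_neg_mul_le (hη' : 0 ≤ η') (hle : η' ≤ η) (y : ℝ) :
    η * exp (-η' * y) ≤ η' * exp (-η * y) + (η - η') := by
  rcases hη'.eq_or_lt with rfl | hη'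
  · simp
  have hη := hη'.trans_le hle
  have h := convexOn_exp.2 (Set.mem_univ (-η * y)) (Set.mem_univ 0) (div_nonneg hη'.le hη.le)
    (sub_nonneg.2 ((div_le_one hη).2 hle)) (add_sub_cancel _ _)
  have hpt : (η' / η) • (-η * y) + (1 - η' / η) • (0 : ℝ) = -η' * y := by
    simp only [smul_eq_mul, mul_zero, add_zero]; field_simp
  rw [hpt, smul_eq_mul, smul_eq_mul, exp_zero, mul_one] at h
  calc η * exp (-η' * y) ≤ η * (η' / η * exp (-η * y) + (1 - η' / η)) :=
        mul_le_mul_of_nonneg_left h hη.le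
    _ = η' * exp (-η * y) + (η - η') := by field_simp

lemma sq_mul_expRemainder_le_of_nonpos (hη' : 0 ≤ η') (hle : η' ≤ η) (hx : x ≤ 0) :
    η ^ 2 * expRemainder η' x ≤ η' ^ 2 * expRemainder η x := by
  let f := fun y => η' ^ 2 * expRemainder η y - η ^ 2 * expRemainder η' y
  have hf : ∀ y, HasDerivAt f
      (η' ^ 2 * (η - η * exp (-η * y)) - η ^ 2 * (η' - η' * exp (-η' * y))) y := fun y =>
    ((hasDerivAt_expRemainder η y).const_mul _).sub ((hasDerivAt_expRemainder η' y).const_mul _)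
  have hanti : Antitone f := by
    refine antitone_of_deriv_nonpos (fun y => (hf y).differentiableAt) fun y => ?_
    rw [(hf y).deriv]
    have := mul_exp_neg_mul_le hη' hle y
    have : 0 ≤ η * η' := mul_nonneg (hη'.trans hle) hη'
    nlinarith
  have := hanti hx
  simp only [f, expRemainder_zero] at this
  linarith

lemma sq_mul_one_add_mul_expRemainder_le_of_nonneg (hle : η' ≤ η) (hx : 0 ≤ x) :
    η ^ 2 * ((1 + η' * x) * expRemainder η' x) ≤ η' ^ 2 * ((1 + η * x) * expRemainder η x) := by
  let f := fun y => η' ^ 2 * ((1 + η * y) * expRemainder η y)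
      - η ^ 2 * ((1 + η' * y) * expRemainder η' y)
  have hlin : ∀ b y : ℝ, HasDerivAt (fun z => 1 + b * z) b y := fun b y => by
    simpa using ((hasDerivAt_id y).const_mul b).const_add 1
  have hf : ∀ y, HasDerivAt f (η ^ 2 * η' ^ 2 * (y * (exp (-η' * y) - exp (-η * y)))) y := by
    intro y
    refine ((((hlin η y).mul (hasDerivAt_expRemainder η y)).const_mul (η' ^ 2)).sub
      (((hlin η' y).mul (hasDerivAt_expRemainder η' y)).const_mul (η ^ 2))).congr_deriv ?_
    simp only [expRemainder]
    ring
  have hmono : Monotone f := by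
    refine monotone_of_deriv_nonneg (fun y => (hf y).differentiableAt) fun y => ?_
    rw [(hf y).deriv]
    have : 0 ≤ y * (exp (-η' * y) - exp (-η * y)) := by
      rcases le_total 0 y with hy | hy
      · exact mul_nonneg hy (sub_nonneg.2 (exp_le_exp.2 (by nlinarith)))
      · exact mul_nonneg_of_nonpos_of_nonpos hy (sub_nonpos.2 (exp_le_exp.2 (by nlinarith)))
    positivity
  have := hmono hx
  simp only [f, expRemainder_zero] at this
  linarith

lemma sq_mul_expRemainder_le (hη' : 0 ≤ η') (hle : η' ≤ η) (hu : 0 ≤ u) :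
    η ^ 2 * (η' * u + 1) * expRemainder η' x
      ≤ η' ^ 2 * (η * u + 1) * expRemainder η x + η * η' * (η - η') * (if x ≤ u then 0 else x) := by
  have hR := expRemainder_nonneg η x
  have hR' := expRemainder_nonneg η' x
  have hηη' : 0 ≤ η - η' := sub_nonneg.2 hle
  rcases le_total x 0 with hx | hx
  · rw [if_pos (hx.trans hu)]
    have h := sq_mul_expRemainder_le_of_nonpos hη' hle hx
    nlinarith [mul_le_mul_of_nonneg_left h (by positivity : 0 ≤ η' * u + 1),
      mul_nonneg (mul_nonneg hηη' hu) (mul_nonneg (sq_nonneg η') hR)]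
  have hscaled : η' ^ 2 * (η - η') * (u - x) * expRemainder η x ≤ (1 + η' * x) *
      (η' ^ 2 * (η * u + 1) * expRemainder η x - η ^ 2 * (η' * u + 1) * expRemainder η' x) := by
    have h := sq_mul_one_add_mul_expRemainder_le_of_nonneg hle hx
    nlinarith [mul_le_mul_of_nonneg_left h (by positivity : 0 ≤ η' * u + 1)]
  have hpos : 0 < 1 + η' * x := by positivity
  split_ifs with hxu
  · have : 0 ≤ (1 + η' * x) *
        (η' ^ 2 * (η * u + 1) * expRemainder η x - η ^ 2 * (η' * u + 1) * expRemainder η' x) :=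
      le_trans (by have := sub_nonneg.2 hxu; positivity) hscaled
    nlinarith [nonneg_of_mul_nonneg_right this hpos]
  · have hRle := expRemainder_le_mul (hη'.trans hle) hx
    have hxu : 0 ≤ x - u := by linarith
    have hbound : η' * (x - u) * expRemainder η x ≤ η * x * (1 + η' * x) := by
      nlinarith [mul_le_mul_of_nonneg_left hRle (mul_nonneg hη' hxu), mul_nonneg hη' hu,
        mul_nonneg (hη'.trans hle) hx]
    have : 0 ≤ (1 + η' * x) * (η' ^ 2 * (η * u + 1) * expRemainder η x
        + η * η' * (η - η') * x - η ^ 2 * (η' * u + 1) * expRemainder η' x) := by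
      nlinarith [mul_le_mul_of_nonneg_left hbound (mul_nonneg hη' hηη')]
    nlinarith [nonneg_of_mul_nonneg_right this hpos]

lemma exp_add_mul_ite_le (hη' : 0 < η') (hle : η' ≤ η) (hu : 0 ≤ u) (x : ℝ) :
    exp (-η' * x) + (η - η') * η' / (η * (η' * u + 1)) * (if x ≤ u then x else 0)
      ≤ 1 - η' ^ 2 * (η * u + 1) / (η ^ 2 * (η' * u + 1))
        + η' ^ 2 * (η * u + 1) / (η ^ 2 * (η' * u + 1)) * exp (-η * x) := by
  have hη := hη'.trans_le hle
  have h := sq_mul_expRemainder_le (x := x) hη'.le hle hu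
  have hA : 0 < η ^ 2 * (η' * u + 1) := by positivity
  rw [← sub_nonneg]
  -- the linear terms cancel since `η' · η²(η'u+1) - η · η'²(ηu+1) = ηη'(η-η')`
  have key : 1 - η' ^ 2 * (η * u + 1) / (η ^ 2 * (η' * u + 1))
        + η' ^ 2 * (η * u + 1) / (η ^ 2 * (η' * u + 1)) * exp (-η * x)
      - (exp (-η' * x) + (η - η') * η' / (η * (η' * u + 1)) * (if x ≤ u then x else 0))
      = (η' ^ 2 * (η * u + 1) * expRemainder η x + η * η' * (η - η') * (if x ≤ u then 0 else x)
        - η ^ 2 * (η' * u + 1) * expRemainder η' x) / (η ^ 2 * (η' * u + 1)) := by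
    simp only [expRemainder]
    split_ifs <;> field_simp <;> ring
  rw [key]
  exact div_nonneg (by linarith) hA.le

end

lemma integral_le_one_sub_mul_integral {α : Type*} [MeasurableSpace α] {ν : Measure α}
    [IsProbabilityMeasure ν] {f g h : α → ℝ} (hf : Integrable f ν) (hg : Integrable g ν)
    (hh : Integrable h ν) {a κ : ℝ} (ha : 0 ≤ a) (hfgh : ∀ x, f x + κ * g x ≤ 1 - a + a * h x)
    (hh1 : ∫ x, h x ∂ν ≤ 1) :
    ∫ x, f x ∂ν ≤ 1 - κ * ∫ x, g x ∂ν := by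
  have := integral_mono (hf.add (hg.const_mul κ)) ((integrable_const _).add (hh.const_mul a)) hfgh
  simp only [Pi.add_apply] at this
  rw [integral_add hf (hg.const_mul κ), integral_add (integrable_const _) (hh.const_mul a),
    integral_const_mul, integral_const_mul, integral_const, probReal_univ, one_smul] at this
  nlinarith

theorem central_witness_implies_eta_c_central_general
    {𝒲 𝒵 : Type*} [MeasurableSpace 𝒲] [MeasurableSpace 𝒵]
    (Pw : Measure 𝒲) [IsProbabilityMeasure Pw]
    (μ : Measure 𝒵) [IsProbabilityMeasure μ]
    (r : 𝒲 → 𝒵 → ℝ)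
    (η u c : ℝ) (hη : 0 < η) (hu : 0 < u)
    -- all expectations appearing are finite
    (hexpInt : ∀ η' : ℝ, 0 < η' → η' ≤ η →
      Integrable (fun p : 𝒲 × 𝒵 => Real.exp (-η' * r p.1 p.2)) (Pw.prod μ))
    (hwitInt : Integrable
      (fun p : 𝒲 × 𝒵 => if r p.1 p.2 ≤ u then r p.1 p.2 else 0) (Pw.prod μ))
    -- expected `η`-central condition
    (hcentral : ∫ p, Real.exp (-η * r p.1 p.2) ∂(Pw.prod μ) ≤ 1)
    -- `(u, c)`-witness condition
    (hwitness : c * ∫ p, r p.1 p.2 ∂(Pw.prod μ)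
      ≤ ∫ p, (if r p.1 p.2 ≤ u then r p.1 p.2 else 0) ∂(Pw.prod μ)) :
    ∀ η' : ℝ, 0 < η' → η' < η →
      Real.log (∫ p, Real.exp (-η' * r p.1 p.2) ∂(Pw.prod μ))
        ≤ -((c - c * η' / η) / (η' * u + 1)) * η' * ∫ p, r p.1 p.2 ∂(Pw.prod μ) := by
  intro η' hη' hlt
  set κ := (η - η') * η' / (η * (η' * u + 1))
  have hκ : 0 ≤ κ := div_nonneg (mul_nonneg (by linarith) hη'.le) (by positivity)
  have hκc : κ * c = (c - c * η' / η) / (η' * u + 1) * η' := by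
    simp only [κ]; field_simp
  have hI := integral_le_one_sub_mul_integral (hexpInt η' hη' hlt.le) hwitInt (hexpInt η hη le_rfl)
    (by positivity) (fun p => exp_add_mul_ite_le hη' hlt.le hu.le (r p.1 p.2)) hcentral
  have hpos := integral_exp_pos (hexpInt η' hη' hlt.le)
  calc Real.log (∫ p, Real.exp (-η' * r p.1 p.2) ∂(Pw.prod μ))
      ≤ (∫ p, Real.exp (-η' * r p.1 p.2) ∂(Pw.prod μ)) - 1 := log_le_sub_one_of_pos hpos
    _ ≤ -(κ * c) * ∫ p, r p.1 p.2 ∂(Pw.prod μ) := by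
        nlinarith [mul_le_mul_of_nonneg_left hwitness hκ]
    _ = _ := by rw [hκc]; ring

/-- **Corollary 2.** The expected `η`-central condition together with the `(u, c)`-witness
condition implies the `(η', (c - cη'/η)/(η'u + 1))`-central condition for every `0 < η' < η`. -/
theorem central_witness_implies_eta_c_central
    {𝒲 𝒵 : Type*} [MeasurableSpace 𝒲] [MeasurableSpace 𝒵]
    (Pw : Measure 𝒲) [IsProbabilityMeasure Pw]
    (μ : Measure 𝒵) [IsProbabilityMeasure μ]
    (ℓ : 𝒲 → 𝒵 → ℝ) (hℓ : Measurable (Function.uncurry ℓ))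
    (wstar : 𝒲) (hwstar : ∀ w, ∫ z, ℓ wstar z ∂μ ≤ ∫ z, ℓ w z ∂μ)
    (r : 𝒲 → 𝒵 → ℝ) (hr : r = fun w z => ℓ w z - ℓ wstar z)
    (η u c : ℝ) (hη : 0 < η) (hu : 0 < u) (hc : 0 < c) (hc1 : c ≤ 1)
    -- all expectations appearing are finite
    (hrInt : Integrable (fun p : 𝒲 × 𝒵 => r p.1 p.2) (Pw.prod μ))
    (hexpInt : ∀ η' : ℝ, 0 < η' → η' ≤ η →
      Integrable (fun p : 𝒲 × 𝒵 => Real.exp (-η' * r p.1 p.2)) (Pw.prod μ))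
    (hwitInt : Integrable
      (fun p : 𝒲 × 𝒵 => if r p.1 p.2 ≤ u then r p.1 p.2 else 0) (Pw.prod μ))
    -- expected `η`-central condition
    (hcentral : ∫ p, Real.exp (-η * r p.1 p.2) ∂(Pw.prod μ) ≤ 1)
    -- `(u, c)`-witness condition
    (hwitness : c * ∫ p, r p.1 p.2 ∂(Pw.prod μ)
      ≤ ∫ p, (if r p.1 p.2 ≤ u then r p.1 p.2 else 0) ∂(Pw.prod μ)) :
    ∀ η' : ℝ, 0 < η' → η' < η →
      Real.log (∫ p, Real.exp (-η' * r p.1 p.2) ∂(Pw.prod μ))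
        ≤ -((c - c * η' / η) / (η' * u + 1)) * η' * ∫ p, r p.1 p.2 ∂(Pw.prod μ) :=
  central_witness_implies_eta_c_central_general Pw μ r η u c hη hu hexpInt hwitInt hcentral hwitness
end
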